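/- Let A and B be nonempty closed convex subsets of X, set T := P_B ∘ P_A, and suppose T has no fixed point. Set R := (rec A) ∩ (rec B) and suppose that R ∩ R^⊕ is a ray. Then for every x ∈ X the sequence (Tⁿx/‖Tⁿx‖) (eventually well defined) converges. -/

import Mathlib

open Filter Topology

variable {X : Type*} [NormedAddCommGroup X] [InnerProductSpace ℝ X] [FiniteDimensional ℝ X]

/-- `P` is the projector onto the set `C`: `P x` is a point of `C` nearest to `x`. -/
def IsProjector (C : Set X) (P : X → X) : Prop :=
  ∀ x : X, P x ∈ C ∧ ∀ y ∈ C, ‖x - P x‖ ≤ ‖x - y‖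

/-- The recession cone `rec S = {x : x + S ⊆ S}` of a set `S`. -/
def recCone (S : Set X) : Set X := {x : X | ∀ s ∈ S, x + s ∈ S}

/-- `S^⊕ = −(S^⊖) = {x : ⟪x, s⟫ ≥ 0 for all s ∈ S}`. -/
def plusCone (S : Set X) : Set X := {x : X | ∀ s ∈ S, (0 : ℝ) ≤ inner ℝ x s}

/-- A ray: the set of nonnegative multiples of some nonzero direction `d`. -/
def IsRay (S : Set X) : Prop := ∃ d : X, d ≠ 0 ∧ S = {y : X | ∃ t : ℝ, 0 ≤ t ∧ y = t • d}

open RealInnerProductSpace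

/-!
Along the iterates `uₙ = Tⁿx` the displacements `‖uₙ - P_A uₙ‖` and `‖P_A uₙ - uₙ₊₁‖` interlace
decreasingly, so they share a limit; passing to the limit along a cluster point `p` of `(uₙ)` shows
that `p` is a fixed point of `T`. Hence `‖uₙ‖ → ∞`. A cluster point `q` of `uₙ/‖uₙ‖` is then a
limit of vanishing multiples of points of `B` (and, up to bounded displacements, of `A`), so it lies
in `R`; it lies in `R^⊕` because `⟪uₙ, r⟫` is nondecreasing for `r ∈ R`. Thus `q` is the unit
vector of the ray `R ∩ R^⊕`, and compactness of the sphere gives convergence.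
-/

section

variable {E : Type*} [NormedAddCommGroup E] {A B C : Set E} {P PA PB : E → E}

theorem mem_recCone_of_tendsto [NormedSpace ℝ E] {ι : Type*} {l : Filter ι} [l.NeBot]
    (hCc : IsClosed C) (hC : Convex ℝ C) {t : ι → ℝ} {c : ι → E} {q : E} (hc : ∀ᶠ i in l, c i ∈ C)
    (ht0 : ∀ᶠ i in l, 0 ≤ t i) (ht : Tendsto t l (𝓝 0))
    (hq : Tendsto (fun i => t i • c i) l (𝓝 q)) : q ∈ recCone C := by
  intro s hs
  have hlim : Tendsto (fun i => (1 - t i) • s + t i • c i) l (𝓝 (q + s)) := by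
    have := (((tendsto_const_nhds (x := (1 : ℝ))).sub ht).smul_const s).add hq
    rwa [sub_zero, one_smul, add_comm s] at this
  refine hCc.mem_of_tendsto hlim ?_
  filter_upwards [hc, ht0, ht.eventually (eventually_le_nhds one_pos)] with i hci hti hti'
  exact hC hs hci (by linarith) hti (by ring)

theorem eventually_iterate_mem (hPB : IsProjector B PB) (x : E) :
    ∀ᶠ n in atTop, (PB ∘ PA)^[n] x ∈ B := by
  filter_upwards [eventually_ge_atTop 1] with n hn
  obtain ⟨m, rfl⟩ := Nat.exists_eq_add_of_le' hn
  rw [Function.iterate_succ_apply']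
  exact (hPB _).1

theorem exists_tendsto_norm_sub_proj_iterate (hPA : IsProjector A PA) (hPB : IsProjector B PB)
    (x : E) : ∃ δ, Tendsto (fun n => ‖(PB ∘ PA)^[n] x - PA ((PB ∘ PA)^[n] x)‖) atTop (𝓝 δ) ∧
      Tendsto (fun n => ‖PA ((PB ∘ PA)^[n] x) - PB (PA ((PB ∘ PA)^[n] x))‖) atTop (𝓝 δ) := by
  set u := fun n => (PB ∘ PA)^[n] x
  have hsucc : ∀ n, u (n + 1) = PB (PA (u n)) := fun n => Function.iterate_succ_apply' _ n x
  have hA_step : ∀ n, ‖u (n + 1) - PA (u (n + 1))‖ ≤ ‖PA (u n) - PB (PA (u n))‖ := fun n =>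
    calc ‖u (n + 1) - PA (u (n + 1))‖ ≤ ‖u (n + 1) - PA (u n)‖ := (hPA _).2 _ (hPA _).1
      _ = ‖PA (u n) - PB (PA (u n))‖ := by rw [norm_sub_rev, hsucc]
  have hB_step : ∀ n, ‖PA (u (n + 1)) - PB (PA (u (n + 1)))‖ ≤ ‖u (n + 1) - PA (u (n + 1))‖ :=
    fun n => by
      rw [norm_sub_rev (u (n + 1))]
      exact (hPB _).2 _ (by rw [hsucc]; exact (hPB _).1)
  have hanti : Antitone fun n => ‖PA (u n) - PB (PA (u n))‖ :=
    antitone_nat_of_succ_le fun n => (hB_step n).trans (hA_step n)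
  have hlim := tendsto_atTop_ciInf hanti ⟨0, by rintro _ ⟨n, rfl⟩; positivity⟩
  refine ⟨_, (tendsto_add_atTop_iff_nat 1).1 ?_, hlim⟩
  exact tendsto_of_tendsto_of_tendsto_of_le_of_le (hlim.comp (tendsto_add_atTop_nat 1)) hlim
    hB_step hA_step

variable [InnerProductSpace ℝ E]

namespace IsProjector

theorem inner_sub_le_zero (hC : Convex ℝ C) (hP : IsProjector C P) (x : E) {y : E}
    (hy : y ∈ C) : ⟪x - P x, y - P x⟫ ≤ 0 := by
  have : Nonempty C := ⟨⟨y, hy⟩⟩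
  have hbdd : BddBelow (Set.range fun w : C => ‖x - w‖) := ⟨0, by rintro _ ⟨w, rfl⟩; positivity⟩
  refine (norm_eq_iInf_iff_real_inner_le_zero hC (hP x).1).1 (le_antisymm ?_ ?_) y hy
  · exact le_ciInf fun w => (hP x).2 w w.2
  · exact ciInf_le hbdd ⟨P x, (hP x).1⟩

theorem eq_of_norm_sub_le (hC : Convex ℝ C) (hP : IsProjector C P) {x y : E} (hy : y ∈ C)
    (h : ‖x - y‖ ≤ ‖x - P x‖) : P x = y := by
  have hinner := hP.inner_sub_le_zero hC x hy
  have hexpand : ‖x - y‖ ^ 2 = ‖x - P x‖ ^ 2 - 2 * ⟪x - P x, y - P x⟫ + ‖y - P x‖ ^ 2 := by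
    rw [← norm_sub_sq_real, sub_sub_sub_cancel_right]
  have : ‖y - P x‖ = 0 := by nlinarith [norm_nonneg (x - y), norm_nonneg (y - P x)]
  exact (norm_sub_eq_zero_iff.1 this).symm

theorem lipschitzWith_one (hC : Convex ℝ C) (hP : IsProjector C P) : LipschitzWith 1 P := by
  refine LipschitzWith.of_dist_le_mul fun x y => ?_
  rw [dist_eq_norm, dist_eq_norm, NNReal.coe_one, one_mul]
  have hx := hP.inner_sub_le_zero hC x (hP y).1
  have hy := hP.inner_sub_le_zero hC y (hP x).1
  -- firm nonexpansiveness, obtained by adding the two variational inequalities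
  have hfirm : ‖P x - P y‖ ^ 2 ≤ ⟪x - y, P x - P y⟫ := by
    have hneg : ⟪x - P x, P x - P y⟫ = -⟪x - P x, P y - P x⟫ := by
      rw [← inner_neg_right, neg_sub]
    have hsplit : ⟪x - y, P x - P y⟫ - ‖P x - P y‖ ^ 2
        = ⟪x - P x, P x - P y⟫ - ⟪y - P y, P x - P y⟫ := by
      rw [← real_inner_self_eq_norm_sq, ← inner_sub_left, ← inner_sub_left]
      congr 1; abel
    linarith
  nlinarith [real_inner_le_norm (x - y) (P x - P y), norm_nonneg (P x - P y),
    norm_nonneg (x - y)]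

theorem continuous (hC : Convex ℝ C) (hP : IsProjector C P) : Continuous P :=
  (hP.lipschitzWith_one hC).continuous

theorem inner_le_inner_of_mem_recCone (hC : Convex ℝ C) (hP : IsProjector C P) {r : E}
    (hr : r ∈ recCone C) (x : E) : ⟪x, r⟫ ≤ ⟪P x, r⟫ := by
  have := hP.inner_sub_le_zero hC x (hr _ (hP x).1)
  rw [add_sub_cancel_right, inner_sub_left] at this
  linarith

end IsProjector

theorem IsRay.exists_forall_norm_eq_one {S : Set E} (hS : IsRay S) :
    ∃ e, ∀ q ∈ S, ‖q‖ = 1 → q = e := by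
  obtain ⟨d, hd, rfl⟩ := hS
  refine ⟨‖d‖⁻¹ • d, ?_⟩
  rintro _ ⟨t, ht, rfl⟩ hq
  rw [norm_smul, Real.norm_of_nonneg ht] at hq
  rw [eq_inv_of_mul_eq_one_left hq]

theorem isFixedPt_of_mapClusterPt_iterate (hA : Convex ℝ A) (hBc : IsClosed B)
    (hB : Convex ℝ B) (hPA : IsProjector A PA) (hPB : IsProjector B PB) {x p : E}
    (hp : MapClusterPt p atTop fun n => (PB ∘ PA)^[n] x) : Function.IsFixedPt (PB ∘ PA) p := by
  obtain ⟨U, hU, hpU⟩ := mapClusterPt_iff_ultrafilter.1 hp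
  obtain ⟨δ, hAgap, hBgap⟩ := exists_tendsto_norm_sub_proj_iterate hPA hPB x
  have hpB : p ∈ B := hBc.mem_of_tendsto hpU ((eventually_iterate_mem hPB x).filter_mono hU)
  have hPAc := hPA.continuous hA
  have hAgap_p : ‖p - PA p‖ = δ :=
    tendsto_nhds_unique (((continuous_id.sub hPAc).norm.tendsto p).comp hpU) (hAgap.mono_left hU)
  have hBgap_p : ‖PA p - PB (PA p)‖ = δ :=
    tendsto_nhds_unique (((hPAc.sub ((hPB.continuous hB).comp hPAc)).norm.tendsto p).comp hpU)
      (hBgap.mono_left hU)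
  exact hPB.eq_of_norm_sub_le hB hpB (by rw [norm_sub_rev, hAgap_p, hBgap_p])

theorem tendsto_norm_iterate_atTop [ProperSpace E] (hA : Convex ℝ A) (hBc : IsClosed B)
    (hB : Convex ℝ B) (hPA : IsProjector A PA) (hPB : IsProjector B PB)
    (hfix : ∀ y, (PB ∘ PA) y ≠ y) (x : E) :
    Tendsto (fun n => ‖(PB ∘ PA)^[n] x‖) atTop atTop := by
  refine tendsto_atTop.2 fun M => ?_
  by_contra hM
  have hball : ∃ᶠ n in atTop, (PB ∘ PA)^[n] x ∈ Metric.closedBall 0 M :=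
    (not_eventually.1 hM).mono fun n hn => by simpa using (not_le.1 hn).le
  obtain ⟨p, -, hp⟩ := (isCompact_closedBall (0 : E) M).exists_mapClusterPt_of_frequently hball
  exact hfix p (isFixedPt_of_mapClusterPt_iterate hA hBc hB hPA hPB hp)

theorem monotone_inner_iterate (hA : Convex ℝ A) (hB : Convex ℝ B) (hPA : IsProjector A PA)
    (hPB : IsProjector B PB) {r : E} (hr : r ∈ recCone A ∩ recCone B) (x : E) :
    Monotone fun n => ⟪(PB ∘ PA)^[n] x, r⟫ :=
  monotone_nat_of_le_succ fun n => by
    rw [Function.iterate_succ_apply']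
    exact (hPA.inner_le_inner_of_mem_recCone hA hr.1 _).trans
      (hPB.inner_le_inner_of_mem_recCone hB hr.2 _)

theorem mem_of_mapClusterPt_normalized_iterate (hAc : IsClosed A) (hA : Convex ℝ A)
    (hBc : IsClosed B) (hB : Convex ℝ B) (hPA : IsProjector A PA) (hPB : IsProjector B PB)
    {x q : E} (hx : Tendsto (fun n => ‖(PB ∘ PA)^[n] x‖) atTop atTop)
    (hq : MapClusterPt q atTop fun n => ‖(PB ∘ PA)^[n] x‖⁻¹ • (PB ∘ PA)^[n] x) :
    q ∈ (recCone A ∩ recCone B) ∩ plusCone (recCone A ∩ recCone B) := by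
  set u := fun n => (PB ∘ PA)^[n] x
  obtain ⟨U, hU, hqU⟩ := mapClusterPt_iff_ultrafilter.1 hq
  have ht : Tendsto (fun n => ‖u n‖⁻¹) U (𝓝 0) := (hx.mono_left hU).inv_tendsto_atTop
  have ht0 : ∀ᶠ n in U, 0 ≤ ‖u n‖⁻¹ := Eventually.of_forall fun n => by positivity
  have hqB : q ∈ recCone B :=
    mem_recCone_of_tendsto hBc hB ((eventually_iterate_mem hPB x).filter_mono hU) ht0 ht hqU
  have hqA : q ∈ recCone A := by
    refine mem_recCone_of_tendsto (c := fun n => PA (u n)) hAc hA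
      (Eventually.of_forall fun n => (hPA _).1) ht0 ht ?_
    obtain ⟨δ, hAgap, -⟩ := exists_tendsto_norm_sub_proj_iterate hPA hPB x
    have hgap : Tendsto (fun n => ‖u n‖⁻¹ • (u n - PA (u n))) U (𝓝 0) :=
      ht.zero_smul_isBoundedUnder_le (hAgap.mono_left hU).isBoundedUnder_le
    simpa [u, smul_sub] using hqU.sub hgap
  refine ⟨⟨hqA, hqB⟩, fun r hr => ?_⟩
  have hlower : Tendsto (fun n => ‖u n‖⁻¹ * ⟪x, r⟫) U (𝓝 0) := by
    simpa using ht.mul_const ⟪x, r⟫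
  refine le_of_tendsto_of_tendsto hlower (hqU.inner tendsto_const_nhds) (ht0.mono fun n hn => ?_)
  change ‖u n‖⁻¹ * ⟪x, r⟫ ≤ ⟪‖u n‖⁻¹ • u n, r⟫
  rw [real_inner_smul_left]
  exact mul_le_mul_of_nonneg_left (monotone_inner_iterate hA hB hPA hPB hr x (Nat.zero_le n)) hn

end

theorem stmt12_general (A B : Set X) (hAcl : IsClosed A) (hAconv : Convex ℝ A)
    (hBcl : IsClosed B) (hBconv : Convex ℝ B)
    (PA PB : X → X) (hPA : IsProjector A PA) (hPB : IsProjector B PB)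
    (T : X → X) (hT : T = PB ∘ PA) (hfix : ∀ x : X, T x ≠ x)
    (R : Set X) (hR : R = recCone A ∩ recCone B)
    (hray : IsRay (R ∩ plusCone R)) :
    ∀ x : X, ∃ q : X,
      Tendsto (fun n : ℕ => ‖T^[n] x‖⁻¹ • T^[n] x) atTop (nhds q) := by
  subst hT hR
  intro x
  have hx := tendsto_norm_iterate_atTop hAconv hBcl hBconv hPA hPB hfix x
  obtain ⟨e, he⟩ := hray.exists_forall_norm_eq_one
  refine ⟨e, (isCompact_sphere (0 : X) 1).tendsto_nhds_of_unique_mapClusterPt ?_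
    fun q hq hqx => he q (mem_of_mapClusterPt_normalized_iterate hAcl hAconv hBcl hBconv hPA hPB
      hx hqx) (by simpa using hq)⟩
  filter_upwards [hx.eventually_gt_atTop 0] with n hn
  simpa using norm_smul_inv_norm (𝕜 := ℝ) (norm_pos_iff.1 hn)

/-- For fixed-point free `T = P_B ∘ P_A` and `R = rec A ∩ rec B`,
if `R ∩ R^⊕` is a ray then the normalized iterates `Tⁿx/‖Tⁿx‖` converge for every `x`. -/
theorem stmt12 (A B : Set X) (hAne : A.Nonempty) (hAcl : IsClosed A) (hAconv : Convex ℝ A)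
    (hBne : B.Nonempty) (hBcl : IsClosed B) (hBconv : Convex ℝ B)
    (PA PB : X → X) (hPA : IsProjector A PA) (hPB : IsProjector B PB)
    (T : X → X) (hT : T = PB ∘ PA) (hfix : ∀ x : X, T x ≠ x)
    (R : Set X) (hR : R = recCone A ∩ recCone B)
    (hray : IsRay (R ∩ plusCone R)) :
    ∀ x : X, ∃ q : X,
      Tendsto (fun n : ℕ => ‖T^[n] x‖⁻¹ • T^[n] x) atTop (nhds q) :=
  stmt12_general A B hAcl hAconv hBcl hBconv PA PB hPA hPB T hT hfix R hR hray
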